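/- Let G be a compact connected abelian Hausdorff topological group and let k ≥ 2 be an integer. If there exists a k-sheeted covering map from a connected Hausdorff topological space onto G, then G does not admit a k-mean. -/

import Mathlib

/-- A `k`-sheeted covering map: a continuous surjection such that every point of the base
has an open neighborhood `W` whose preimage is partitioned into `k` disjoint open sets,
each mapped homeomorphically onto `W` by `p`. -/
def IsCoveringOfDegree {X Y : Type*} [TopologicalSpace X] [TopologicalSpace Y]
    (k : ℕ) (p : X → Y) : Prop :=
  Continuous p ∧ Function.Surjective p ∧
    ∀ y : Y, ∃ W : Set Y, IsOpen W ∧ y ∈ W ∧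
      ∃ V : Fin k → Set X,
        (∀ i, IsOpen (V i)) ∧
        (Pairwise fun i j => Disjoint (V i) (V j)) ∧
        (⋃ i, V i) = p ⁻¹' W ∧
        ∀ i, ∃ e : (V i) ≃ₜ W, ∀ x : (V i), p x = e x

/-- An `n`-mean on a topological space `G`: a continuous symmetric map `Gⁿ → G`
restricting to the identity on the diagonal. -/
def IsMean {G : Type*} [TopologicalSpace G] (n : ℕ) (μ : (Fin n → G) → G) : Prop :=
  Continuous μ ∧ (∀ (g : Fin n → G) (σ : Equiv.Perm (Fin n)), μ (g ∘ σ) = μ g) ∧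
    ∀ x : G, μ (fun _ => x) = x

/-!
A `k`-sheeted covering `p : X → G` lets loops at `1` act on the fibre `p ⁻¹' {1}` by monodromy.
As `G` need not be locally path-connected, loops are discrete: lists of points of `G` whose
consecutive quotients lie in a small neighbourhood `U` of `1`, lifted step by step to `X`. Since
`X` is compact, one scale `U` works everywhere, and lifts of short chains depend only on their
endpoints. Consequently two monotone lattice paths with the same endpoints in a grid with small
steps have the same lift. The grid `(s, s') ↦ c(s) * c'(s')` shows that monodromy is abelian,
and connectedness of `X` makes it transitive, so it acts simply transitively on the `k` points of
the fibre and every monodromy permutation `σ` satisfies `σ ^ k = 1`. A `k`-mean `μ` turns the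
grid `t ↦ μ(ℓ(t₀), …, ℓ(t_{k-1}))` into a proof that the monodromy of any loop `ℓ` is the `k`-th
power of that of `s ↦ μ(ℓ(s), 1, …, 1)`, hence trivial; for `k ≥ 2` this contradicts
transitivity.
-/

open Filter Topology

theorem List.getD_cons_of_length_le {α : Type*} {a d : α} {c : List α} {s : ℕ}
    (hc : c.getLastD a = d) (hs : c.length ≤ s) : (a :: c).getD s d = d := by
  induction c generalizing a s with
  | nil => cases s <;> simp_all
  | cons b c ih =>
    cases s with
    | zero => simp at hs
    | succ s => exact ih (by rwa [List.getLastD_cons] at hc) (by simpa using hs)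

theorem List.foldl_flatten_replicate {α β : Type*} (f : β → α → β) (l : List α) (j : ℕ) (x : β) :
    (List.replicate j l).flatten.foldl f x = (fun y => l.foldl f y)^[j] x := by
  induction j generalizing x with
  | zero => rfl
  | succ j ih =>
    rw [List.replicate_succ, List.flatten_cons, List.foldl_append, ih, Function.iterate_succ_apply]

theorem List.perm_flatten_replicate_flatMap_replicate {α : Type*} [DecidableEq α] (N : ℕ)
    (l : List α) : (List.replicate N l).flatten.Perm (l.flatMap (List.replicate N)) := by
  rw [List.perm_iff_count]
  intro a
  rw [List.count_flatten, List.count_flatMap, List.map_replicate, List.sum_replicate, smul_eq_mul]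
  induction l with
  | nil => simp
  | cons b l ih => by_cases h : b = a <;> simp [← ih, List.count_replicate, h, mul_add, add_comm]

theorem apply_mulSingle_eq_of_comp_perm {G Y : Type*} [One G] {k : ℕ} {μ : (Fin k → G) → Y}
    (hsymm : ∀ (g : Fin k → G) (σ : Equiv.Perm (Fin k)), μ (g ∘ σ) = μ g) (i j : Fin k) (g : G) :
    μ (Pi.mulSingle i g) = μ (Pi.mulSingle j g) := by
  rw [← hsymm _ (Equiv.swap i j), Pi.mulSingle_comp_equiv, Equiv.symm_swap, Equiv.swap_apply_left]

theorem Equiv.Perm.pow_card_eq_one_of_commute {F : Type*} [Finite F] {S : Set (Equiv.Perm F)}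
    (hS : ∀ σ ∈ S, ∀ τ ∈ S, Commute σ τ) (htrans : ∀ a b, ∃ σ ∈ S, σ a = b) {σ : Equiv.Perm F}
    (hσ : σ ∈ S) : σ ^ Nat.card F = 1 := by
  rcases isEmpty_or_nonempty F with hF | ⟨⟨a⟩⟩
  · exact Subsingleton.elim _ _
  have hSZ : S ⊆ Subgroup.centralizer S := fun τ hτ =>
    Subgroup.mem_centralizer_iff.2 fun ρ hρ => (hS ρ hρ τ hτ).eq
  have hinj : Function.Injective fun τ : Subgroup.centralizer S => (τ : Equiv.Perm F) a := by
    rintro ⟨τ₁, hτ₁⟩ ⟨τ₂, hτ₂⟩ (h : τ₁ a = τ₂ a)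
    refine Subtype.ext <| Equiv.ext fun y => ?_
    obtain ⟨γ, hγ, rfl⟩ := htrans a y
    calc τ₁ (γ a) = γ (τ₁ a) := (congrArg (· a) (Subgroup.mem_centralizer_iff.1 hτ₁ γ hγ)).symm
      _ = γ (τ₂ a) := congrArg γ h
      _ = τ₂ (γ a) := congrArg (· a) (Subgroup.mem_centralizer_iff.1 hτ₂ γ hγ)
  have hsurj : Function.Surjective fun τ : Subgroup.centralizer S => (τ : Equiv.Perm F) a :=
    fun b => (htrans a b).elim fun γ hγ => ⟨⟨γ, hSZ hγ.1⟩, hγ.2⟩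
  rw [← Nat.card_eq_of_bijective _ ⟨hinj, hsurj⟩]
  exact congrArg Subtype.val (pow_card_eq_one' (x := (⟨σ, hSZ hσ⟩ : Subgroup.centralizer S)))

theorem Continuous.exists_nhds_one_forall_inv_mul_mem {G ι : Type*} [Group G] [TopologicalSpace G]
    [IsTopologicalGroup G] [CompactSpace G] [Finite ι] {μ : (ι → G) → G} (hμ : Continuous μ)
    {U : Set G} (hU : U ∈ 𝓝 1) :
    ∃ V ∈ 𝓝 (1 : G), ∀ a b : ι → G, (∀ i, (a i)⁻¹ * b i ∈ V) → (μ a)⁻¹ * μ b ∈ U := by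
  let := IsTopologicalGroup.leftUniformSpace G
  let := IsTopologicalGroup.leftUniformSpace (ι → G)
  obtain ⟨W, hW, hWU⟩ := Filter.mem_comap.1 <|
    CompactSpace.uniformContinuous_of_continuous hμ (Filter.preimage_mem_comap hU)
  rw [nhds_pi, Filter.mem_pi'] at hW
  obtain ⟨I, t, ht, hIW⟩ := hW
  refine ⟨⋂ i, t i, Filter.iInter_mem.2 ht, fun a b hab => @hWU (a, b) (hIW fun i _ => ?_)⟩
  exact Set.mem_iInter.1 (hab i) i

section Uniform

open scoped Uniformity
open UniformSpace

variable {X : Type*} [UniformSpace X]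

theorem exists_mem_uniformity_isChain_getLastD_mem (n : ℕ) {D : SetRel X X} (hD : D ∈ 𝓤 X) :
    ∃ E ∈ 𝓤 X, ∀ x l, l.length ≤ n → (x :: l).IsChain (fun a b => (a, b) ∈ E) →
      (x, l.getLastD x) ∈ D := by
  induction n generalizing D with
  | zero =>
    refine ⟨D, hD, fun x l hl _ => ?_⟩
    rw [List.length_eq_zero_iff.1 (Nat.le_zero.1 hl)]
    exact refl_mem_uniformity hD
  | succ n ih =>
    obtain ⟨D', hD', hD'D⟩ := comp_mem_uniformity_sets hD
    obtain ⟨E, hE, hEchain⟩ := ih hD'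
    refine ⟨E ∩ D', Filter.inter_mem hE hD', fun x l hl hchain => ?_⟩
    cases l with
    | nil => exact refl_mem_uniformity hD
    | cons y l =>
      rw [List.isChain_cons_cons] at hchain
      rw [List.getLastD_cons]
      exact hD'D ⟨y, hchain.1.2,
        hEchain y l (by simpa using hl) (hchain.2.imp fun _ _ h => h.1)⟩

theorem IsLocallyInjective.exists_mem_uniformity [CompactSpace X] {Y : Type*} {f : X → Y}
    (hf : IsLocallyInjective f) : ∃ E ∈ 𝓤 X, ∀ x y, (x, y) ∈ E → f x = f y → x = y := by
  choose V hVo hxV hV using hf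
  obtain ⟨E, hE, hEV⟩ := lebesgue_number_lemma isCompact_univ hVo
    fun x _ => Set.mem_iUnion.2 ⟨x, hxV x⟩
  refine ⟨E, hE, fun x y hxy hfxy => ?_⟩
  obtain ⟨z, hz⟩ := hEV x trivial
  exact hV z (hz (refl_mem_uniformity hE)) (hz hxy) hfxy

variable {G : Type*} [Group G] [TopologicalSpace G] [IsTopologicalGroup G]

theorem IsOpenMap.exists_nhds_one_forall_exists_mem [CompactSpace X] {p : X → G}
    (hc : Continuous p) (ho : IsOpenMap p) {E : SetRel X X} (hE : E ∈ 𝓤 X) :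
    ∃ U ∈ 𝓝 (1 : G), ∀ x g, (p x)⁻¹ * g ∈ U → ∃ y, (x, y) ∈ E ∧ p y = g := by
  obtain ⟨E', hE', _, hE'E⟩ := comp_symm_mem_uniformity_sets hE
  have hS (x : X) : ∃ S ∈ 𝓝 (1 : G), ∀ a ∈ S, ∀ b ∈ S, p x * (a * b) ∈ p '' ball x E' := by
    have hball : p '' ball x E' ∈ 𝓝 (p x * 1) := by
      rw [mul_one]; exact ho.image_mem_nhds (ball_mem_nhds x hE')
    exact exists_nhds_one_split ((continuous_const.mul continuous_id).continuousAt hball)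
  choose S hS hSmul using hS
  have hN (x : X) : ball x E' ∩ {y | (p x)⁻¹ * p y ∈ S x} ∈ 𝓝 x :=
    Filter.inter_mem (ball_mem_nhds x hE')
      ((continuous_const.mul hc).tendsto' x 1 (by simp) (hS x))
  obtain ⟨t, ht⟩ := CompactSpace.elim_nhds_subcover _ hN
  refine ⟨⋂ x ∈ t, S x, (Filter.biInter_finset_mem t).2 fun x _ => hS x, fun x' g hg => ?_⟩
  have hx' : x' ∈ ⋃ x ∈ t, ball x E' ∩ {y | (p x)⁻¹ * p y ∈ S x} := by rw [ht]; trivial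
  obtain ⟨x, hx'x, hxt, hx'S⟩ : ∃ x, x' ∈ ball x E' ∧ x ∈ t ∧ (p x)⁻¹ * p x' ∈ S x := by
    simpa using hx'
  obtain ⟨y, hy, hpy⟩ := hSmul x _ hx'S _ (Set.mem_iInter₂.1 hg x hxt)
  exact ⟨y, hE'E ⟨x, SetRel.symm E' hx'x, hy⟩, by rw [hpy]; group⟩

end Uniform

namespace IsCoveringOfDegree

variable {X Y : Type*} [TopologicalSpace X] [TopologicalSpace Y] {k : ℕ} {p : X → Y}

theorem isLocalHomeomorph (hp : IsCoveringOfDegree k p) : IsLocalHomeomorph p := by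
  refine isLocalHomeomorph_iff_isOpenEmbedding_restrict.2 fun x => ?_
  obtain ⟨W, hWo, hxW, V, hVo, -, hVW, he⟩ := hp.2.2 (p x)
  obtain ⟨i, hi⟩ := Set.mem_iUnion.1 (hVW ▸ hxW : x ∈ ⋃ i, V i)
  obtain ⟨e, he⟩ := he i
  refine ⟨V i, (hVo i).mem_nhds hi, ?_⟩
  rw [show (V i).domRestrict p = Subtype.val ∘ e from funext he]
  exact hWo.isOpenEmbedding_subtypeVal.comp e.isOpenEmbedding

theorem card_fiber (hp : IsCoveringOfDegree k p) (y : Y) : Nat.card (p ⁻¹' {y}) = k := by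
  obtain ⟨W, -, hyW, V, -, hdisj, hVW, he⟩ := hp.2.2 y
  choose e he using he
  let f (i : Fin k) : p ⁻¹' {y} := ⟨(e i).symm ⟨y, hyW⟩, by simp [he]⟩
  have hf : Function.Bijective f := by
    refine ⟨fun i j hij => ?_, fun x => ?_⟩
    · by_contra hne
      exact Set.disjoint_left.1 (hdisj hne) ((e i).symm _).2
        ((congrArg Subtype.val hij).symm ▸ ((e j).symm _).2)
    · have hx : p x = y := x.2
      have hxW : (x : X) ∈ ⋃ i, V i := by rw [hVW, Set.mem_preimage, hx]; exact hyW
      obtain ⟨i, hi⟩ := Set.mem_iUnion.1 hxW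
      have hex : e i ⟨x, hi⟩ = ⟨y, hyW⟩ := Subtype.ext ((he i _).symm.trans x.2)
      exact ⟨i, Subtype.ext (by simp [f, ← hex])⟩
  simpa using (Nat.card_eq_of_bijective f hf).symm

theorem compactSpace [CompactSpace Y] [LocallyCompactSpace Y] (hp : IsCoveringOfDegree k p) :
    CompactSpace X := by
  have key (y : Y) : ∃ K ∈ 𝓝 y, IsCompact (p ⁻¹' K) := by
    obtain ⟨W, hWo, hyW, V, -, -, hVW, he⟩ := hp.2.2 y
    choose e he using he
    obtain ⟨K, hKc, hyK, hKW⟩ := exists_compact_subset hWo hyW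
    have hK : IsCompact ((↑) ⁻¹' K : Set W) := by
      rwa [Subtype.isCompact_iff, Subtype.image_preimage_coe, Set.inter_eq_right.2 hKW]
    have hpK : p ⁻¹' K = ⋃ i, (↑) '' ((e i).symm '' ((↑) ⁻¹' K)) := by
      ext x
      refine ⟨fun hx => ?_, ?_⟩
      · have hxV : x ∈ ⋃ i, V i := by rw [hVW]; exact hKW hx
        obtain ⟨i, hi⟩ := Set.mem_iUnion.1 hxV
        exact Set.mem_iUnion.2 ⟨i, ⟨x, hi⟩, ⟨e i ⟨x, hi⟩, by simpa [← he] using hx, by simp⟩, rfl⟩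
      · simp only [Set.mem_iUnion, Set.mem_image]
        rintro ⟨i, _, ⟨w, hw, rfl⟩, rfl⟩
        simpa [he] using hw
    exact ⟨K, mem_interior_iff_mem_nhds.1 hyK, hpK ▸ isCompact_iUnion fun i =>
      (hK.image (e i).symm.continuous).image continuous_subtype_val⟩
  choose K hK hpK using key
  obtain ⟨t, ht⟩ := CompactSpace.elim_nhds_subcover K hK
  have hcover : (Set.univ : Set X) = ⋃ y ∈ t, p ⁻¹' K y := by
    simp only [← Set.preimage_iUnion₂, ht, Set.top_eq_univ, Set.preimage_univ]
  exact ⟨hcover ▸ t.isCompact_biUnion fun y _ => hpK y⟩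

end IsCoveringOfDegree

section FineChain

variable {G : Type*} [Group G]

def IsFineChain (U : Set G) (a : G) (c : List G) : Prop :=
  (a :: c).IsChain fun g h => g⁻¹ * h ∈ U

variable {U : Set G} {a b : G} {c c' : List G}

@[simp]
theorem isFineChain_nil : IsFineChain U a [] :=
  List.isChain_singleton a

@[simp]
theorem isFineChain_cons : IsFineChain U a (b :: c) ↔ a⁻¹ * b ∈ U ∧ IsFineChain U b c :=
  List.isChain_cons_cons

theorem IsFineChain.append (hc : IsFineChain U a c) (hc' : IsFineChain U (c.getLastD a) c') :
    IsFineChain U a (c ++ c') := by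
  induction c generalizing a with
  | nil => simpa using hc'
  | cons b c ih =>
    rw [isFineChain_cons] at hc
    rw [List.getLastD_cons] at hc'
    exact isFineChain_cons.2 ⟨hc.1, ih hc.2 hc'⟩

theorem IsFineChain.mono {U' : Set G} (hc : IsFineChain U a c) (hU : U ⊆ U') :
    IsFineChain U' a c :=
  hc.imp fun _ _ h => hU h

end FineChain

section LoopSeq

variable {G : Type*} [Group G] {U : Set G} {c : List G}

/-- The loop `c` at `1`, read as the sequence `1, c₀, c₁, …, c_{N-1}, 1, 1, …`. -/
def loopSeq (c : List G) (s : ℕ) : G :=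
  (1 :: c).getD s 1

@[simp]
theorem loopSeq_zero : loopSeq c 0 = 1 := rfl

theorem map_loopSeq_range' : (List.range' 1 c.length).map (loopSeq c) = c := by
  refine List.ext_getElem (by simp) fun i h₁ h₂ => ?_
  simp [loopSeq, Nat.add_comm 1 i, h₂]

theorem loopSeq_of_length_le (hc : c.getLastD 1 = 1) {s : ℕ} (hs : c.length ≤ s) :
    loopSeq c s = 1 :=
  List.getD_cons_of_length_le hc hs

theorem inv_loopSeq_mul_loopSeq_succ_mem (h1 : (1 : G) ∈ U) (hc : IsFineChain U 1 c)
    (hc1 : c.getLastD 1 = 1) (s : ℕ) : (loopSeq c s)⁻¹ * loopSeq c (s + 1) ∈ U := by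
  rcases lt_or_ge s c.length with hs | hs
  · have hs' : s + 1 < (1 :: c).length := by simpa using hs
    rw [loopSeq, loopSeq, List.getD_eq_getElem _ _ hs', List.getD_eq_getElem _ _ (by omega)]
    exact hc.getElem s hs'
  · rw [loopSeq_of_length_le hc1 hs, loopSeq_of_length_le hc1 (Nat.le_succ_of_le hs)]
    simpa using h1

end LoopSeq

section GridPath

variable {ι G : Type*} (h : Multiset ι → G)

/-- A lattice point is the multiset of the unit steps taken to reach it from `0`; `gridPath h t w`
lists the values of `h` along the path from `t` that takes the steps `w`. -/
def gridPath : Multiset ι → List ι → List G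
  | _, [] => []
  | t, d :: w => h (d ::ₘ t) :: gridPath (d ::ₘ t) w

variable {h}

@[simp]
theorem gridPath_nil (t : Multiset ι) : gridPath h t [] = [] := rfl

@[simp]
theorem gridPath_cons (t : Multiset ι) (d : ι) (w : List ι) :
    gridPath h t (d :: w) = h (d ::ₘ t) :: gridPath h (d ::ₘ t) w := rfl

@[simp]
theorem length_gridPath (t : Multiset ι) (w : List ι) : (gridPath h t w).length = w.length := by
  induction w generalizing t <;> simp [*]

theorem gridPath_append (t : Multiset ι) (w₁ w₂ : List ι) :
    gridPath h t (w₁ ++ w₂) = gridPath h t w₁ ++ gridPath h (t + w₁) w₂ := by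
  induction w₁ generalizing t with
  | nil => simp
  | cons d w ih => simp [ih, ← Multiset.cons_coe]

theorem gridPath_replicate (t : Multiset ι) (d : ι) (N : ℕ) :
    gridPath h t (List.replicate N d) =
      (List.range' 1 N).map fun s => h (t + Multiset.replicate s d) := by
  induction N generalizing t with
  | zero => rfl
  | succ N ih =>
    rw [List.replicate_succ, gridPath_cons, ih, List.range'_succ, List.map_cons,
      ← List.map_add_range', List.map_map]
    simp only [Function.comp_def, add_comm 1, Multiset.replicate_succ, Multiset.cons_add,
      Multiset.add_cons, Multiset.replicate_zero, add_zero]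

theorem getLastD_gridPath (t : Multiset ι) (w : List ι) :
    (gridPath h t w).getLastD (h t) = h (t + w) := by
  induction w generalizing t with
  | nil => simp
  | cons d w ih =>
    rw [gridPath_cons, List.getLastD_cons, ih, ← Multiset.cons_coe, Multiset.add_cons,
      Multiset.cons_add]

theorem isFineChain_gridPath [Group G] {U : Set G} (hh : ∀ t d, (h t)⁻¹ * h (d ::ₘ t) ∈ U)
    (t : Multiset ι) (w : List ι) : IsFineChain U (h t) (gridPath h t w) := by
  induction w generalizing t with
  | nil => simp
  | cons d w ih => exact isFineChain_cons.2 ⟨hh t d, ih _⟩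

end GridPath

/-- A discrete substitute for path lifting along `p` at scale `U`: `lift x g` lifts the small
step from `p x` to `g` to a step starting at `x`, and lifts of `U`-fine chains of length at most
`n` depend only on the endpoint of the chain. -/
structure ChainLift {X G : Type*} [TopologicalSpace X] [Group G] (p : X → G) (U : Set G)
    (n : ℕ) where
  lift : X → G → X
  one_mem : (1 : G) ∈ U
  inv_mem : ∀ g ∈ U, g⁻¹ ∈ U
  p_lift : ∀ x g, (p x)⁻¹ * g ∈ U → p (lift x g) = g
  foldl_eq : ∀ x c₁ c₂, c₁.length ≤ n → c₂.length ≤ n → IsFineChain U (p x) c₁ →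
    IsFineChain U (p x) c₂ → c₁.getLastD (p x) = c₂.getLastD (p x) →
    c₁.foldl lift x = c₂.foldl lift x
  eventually_lift_eq : ∀ x, ∀ᶠ y in 𝓝 x, lift x (p y) = y

namespace ChainLift

variable {X G : Type*} [TopologicalSpace X] [Group G] {p : X → G} {U : Set G} {n : ℕ}
  (L : ChainLift p U n)

theorem p_foldl {x : X} {c : List G} (hc : IsFineChain U (p x) c) :
    p (c.foldl L.lift x) = c.getLastD (p x) := by
  induction c generalizing x with
  | nil => rfl
  | cons g c ih =>
    obtain ⟨hxg, hc⟩ := isFineChain_cons.1 hc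
    have hg := L.p_lift x g hxg
    rw [List.foldl_cons, ih (by rwa [hg]), hg, List.getLastD_cons]

theorem lift_lift (hn : 2 ≤ n) {x : X} {g : G} (hg : (p x)⁻¹ * g ∈ U) :
    L.lift (L.lift x g) (p x) = x := by
  have hg' : g⁻¹ * p x ∈ U := by simpa using L.inv_mem _ hg
  simpa using L.foldl_eq x [g, p x] [] (by simpa) (by simp) (by simp [hg, hg']) (by simp)
    (by simp)

theorem foldl_injective (hn : 2 ≤ n) {x y : X} {c : List G} (hxy : p x = p y)
    (hc : IsFineChain U (p x) c) (h : c.foldl L.lift x = c.foldl L.lift y) : x = y := by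
  induction c generalizing x y with
  | nil => exact h
  | cons g c ih =>
    obtain ⟨hxg, hc⟩ := isFineChain_cons.1 hc
    have hgx := L.p_lift x g hxg
    have hgy := L.p_lift y g (hxy ▸ hxg)
    have hlift : L.lift x g = L.lift y g := ih (hgx.trans hgy.symm) (by rwa [hgx]) h
    rw [← L.lift_lift hn hxg, hlift, hxy, L.lift_lift hn (hxy ▸ hxg)]

theorem exists_isFineChain_foldl_eq [PreconnectedSpace X] [TopologicalSpace G]
    [IsTopologicalGroup G] (hp : Continuous p) (hn : 2 ≤ n) {V : Set G} (hV : V ∈ 𝓝 1)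
    (hVU : V ⊆ U) (x y : X) : ∃ c, IsFineChain V (p x) c ∧ c.foldl L.lift x = y := by
  refine PreconnectedSpace.induction₂'
    (fun x y => ∃ c, IsFineChain V (p x) c ∧ c.foldl L.lift x = y) (fun x => ?_) ⟨?_⟩ x y
  · have h₁ : ∀ᶠ y in 𝓝 x, (p x)⁻¹ * p y ∈ V :=
      (continuous_const.mul hp).tendsto' x 1 (by simp) hV
    have h₂ : ∀ᶠ y in 𝓝 x, (p y)⁻¹ * p x ∈ V :=
      (hp.inv.mul continuous_const).tendsto' x 1 (by simp) hV
    filter_upwards [h₁, h₂, L.eventually_lift_eq x] with y h₁ h₂ hy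
    refine ⟨⟨[p y], by simp [h₁], hy⟩, ⟨[p x], by simp [h₂], ?_⟩⟩
    rw [List.foldl_cons, List.foldl_nil, ← hy]
    exact L.lift_lift hn (hVU h₁)
  · rintro x _ _ ⟨c, hc, rfl⟩ ⟨c', hc', rfl⟩
    exact ⟨c ++ c', hc.append (by rwa [← L.p_foldl (hc.mono hVU)]), List.foldl_append⟩

theorem foldl_gridPath_eq_of_perm {ι : Type*} (hn : 2 ≤ n) {h : Multiset ι → G}
    (hh : ∀ t d, (h t)⁻¹ * h (d ::ₘ t) ∈ U) {w₁ w₂ : List ι} (hw : w₁.Perm w₂)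
    {t : Multiset ι} {x : X} (hx : p x = h t) :
    (gridPath h t w₁).foldl L.lift x = (gridPath h t w₂).foldl L.lift x := by
  induction hw generalizing t x with
  | nil => rfl
  | cons d _ ih => exact ih (L.p_lift x _ (hx ▸ hh t d))
  | swap d₁ d₂ w =>
    simp only [gridPath_cons, List.foldl_cons]
    rw [Multiset.cons_swap d₁ d₂ t]
    congr 1
    refine L.foldl_eq x [_, _] [_, _] (by simpa) (by simpa) ?_ ?_ (by simp [Multiset.cons_swap])
    · simp only [isFineChain_cons, isFineChain_nil, and_true, hx]
      exact ⟨hh _ _, Multiset.cons_swap d₁ d₂ t ▸ hh _ _⟩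
    · simp only [isFineChain_cons, isFineChain_nil, and_true, hx]
      exact ⟨hh _ _, hh _ _⟩
  | trans _ _ ih₁ ih₂ => exact (ih₁ hx).trans (ih₂ hx)

end ChainLift

section Construction

variable {X G : Type*} [Group G] {p : X → G} {U : Set G}

theorem IsFineChain.exists_isChain_foldl {E : SetRel X X} {lift : X → G → X}
    (hlift : ∀ x g, (p x)⁻¹ * g ∈ U → (x, lift x g) ∈ E ∧ p (lift x g) = g) {x : X}
    {c : List G} (hc : IsFineChain U (p x) c) :
    ∃ l : List X, l.length = c.length ∧ (x :: l).IsChain (fun a b => (a, b) ∈ E) ∧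
      l.getLastD x = c.foldl lift x ∧ p (c.foldl lift x) = c.getLastD (p x) := by
  induction c generalizing x with
  | nil => exact ⟨[], rfl, List.isChain_singleton x, rfl, rfl⟩
  | cons g c ih =>
    obtain ⟨hxg, hc⟩ := isFineChain_cons.1 hc
    obtain ⟨hE, hp⟩ := hlift x g hxg
    obtain ⟨l, hl, hlE, hlast, hplast⟩ := ih (x := lift x g) (by rwa [hp])
    refine ⟨lift x g :: l, by simp [hl], List.isChain_cons_cons.2 ⟨hE, hlE⟩, ?_, ?_⟩
    · rw [List.getLastD_cons, hlast, List.foldl_cons]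
    · rw [List.foldl_cons, hplast, hp, List.getLastD_cons]

open scoped Uniformity
open UniformSpace

variable [UniformSpace X] [TopologicalSpace G] [IsTopologicalGroup G]

theorem exists_chainLift [CompactSpace X] (hc : Continuous p) (ho : IsOpenMap p)
    (hinj : IsLocallyInjective p) (n : ℕ) : ∃ U ∈ 𝓝 (1 : G), Nonempty (ChainLift p U n) := by
  classical
  -- Steps are lifted inside `E₁ ∩ D`. As `p` is injective on `D ○ D`-close pairs, such lifts are
  -- unique; as `E₁`-chains of length `≤ n` end `D`-close to their start, two lifts of short
  -- chains ending over the same point are `D ○ D`-close, hence equal.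
  obtain ⟨E₀, hE₀, hE₀inj⟩ := hinj.exists_mem_uniformity
  obtain ⟨D, hD, _, hDE₀⟩ := comp_symm_mem_uniformity_sets hE₀
  obtain ⟨E₁, hE₁, hE₁D⟩ := exists_mem_uniformity_isChain_getLastD_mem n hD
  obtain ⟨U₀, hU₀, hU₀E⟩ := ho.exists_nhds_one_forall_exists_mem hc (Filter.inter_mem hE₁ hD)
  have hU : U₀ ∩ U₀⁻¹ ∈ 𝓝 (1 : G) := Filter.inter_mem hU₀ (inv_mem_nhds_one G hU₀)
  have hunique {x y y' : X} (hy : (x, y) ∈ D) (hy' : (x, y') ∈ D) (h : p y = p y') : y = y' :=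
    hE₀inj y y' (hDE₀ ⟨x, SetRel.symm D hy, hy'⟩) h
  let lift (x : X) (g : G) : X := if h : ∃ y, (x, y) ∈ E₁ ∩ D ∧ p y = g then h.choose else x
  have hlift (x : X) (g : G) (hg : (p x)⁻¹ * g ∈ U₀ ∩ U₀⁻¹) :
      (x, lift x g) ∈ E₁ ∩ D ∧ p (lift x g) = g := by
    have h := hU₀E x g hg.1
    simp only [lift, dif_pos h]
    exact h.choose_spec
  refine ⟨U₀ ∩ U₀⁻¹, hU, ⟨lift, mem_of_mem_nhds hU, fun g hg => ⟨hg.2, by simpa using hg.1⟩,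
    fun x g hg => (hlift x g hg).2, fun x c₁ c₂ hc₁ hc₂ hch₁ hch₂ hlast => ?_, fun x => ?_⟩⟩
  · obtain ⟨l₁, hl₁, hl₁E, hl₁last, hp₁⟩ := hch₁.exists_isChain_foldl hlift
    obtain ⟨l₂, hl₂, hl₂E, hl₂last, hp₂⟩ := hch₂.exists_isChain_foldl hlift
    refine hunique (x := x) ?_ ?_ (by rw [hp₁, hp₂, hlast])
    · exact hl₁last ▸ hE₁D x l₁ (hl₁ ▸ hc₁) (hl₁E.imp fun _ _ h => h.1)
    · exact hl₂last ▸ hE₁D x l₂ (hl₂ ▸ hc₂) (hl₂E.imp fun _ _ h => h.1)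
  · filter_upwards [ball_mem_nhds x (Filter.inter_mem hE₁ hD),
      (continuous_const.mul hc : Continuous fun y => (p x)⁻¹ * p y).tendsto' x 1 (by simp) hU]
      with y hy hpy
    exact hunique (hlift x _ hpy).1.2 hy.2 (hlift x _ hpy).2

end Construction

namespace ChainLift

variable {X G : Type*} [TopologicalSpace X] {n : ℕ}

section Group

variable [Group G] {p : X → G} {U : Set G} (L : ChainLift p U n)

/-- Each copy of `w` is a chain of length at most `n`, so `foldl_eq` replaces it by a single step
to its endpoint. -/
theorem foldl_gridPath_flatten_replicate {ι : Type*} (hn : 1 ≤ n) {h : Multiset ι → G}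
    (hh : ∀ t d, (h t)⁻¹ * h (d ::ₘ t) ∈ U) {w : List ι} (hw : w.length ≤ n)
    (hstep : ∀ j : ℕ, (h (j • (w : Multiset ι)))⁻¹ * h ((j + 1) • (w : Multiset ι)) ∈ U)
    (M j : ℕ) {x : X} (hx : p x = h (j • (w : Multiset ι))) :
    (gridPath h (j • (w : Multiset ι)) (List.replicate M w).flatten).foldl L.lift x =
      ((List.range' (j + 1) M).map fun i => h (i • (w : Multiset ι))).foldl L.lift x := by
  induction M generalizing j x with
  | zero => rfl
  | succ M ih =>
    have hblock : (gridPath h (j • (w : Multiset ι)) w).foldl L.lift x =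
        L.lift x (h ((j + 1) • (w : Multiset ι))) := by
      refine L.foldl_eq x _ [_] (by simpa) (by simpa) (hx ▸ isFineChain_gridPath hh _ _)
        (by simpa [hx] using hstep j) ?_
      rw [hx, getLastD_gridPath, succ_nsmul]
      rfl
    rw [List.replicate_succ, List.flatten_cons, gridPath_append, List.foldl_append, hblock,
      ← succ_nsmul, ih (j + 1) (L.p_lift x _ (hx ▸ hstep j)), List.range'_succ]
    rfl

def monodromy : Set (Equiv.Perm (p ⁻¹' {1})) :=
  {σ | ∃ c, IsFineChain U 1 c ∧ c.getLastD 1 = 1 ∧ ∀ x, (σ x : X) = c.foldl L.lift x}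

theorem exists_mem_monodromy [Finite (p ⁻¹' {1})] (hn : 2 ≤ n) {c : List G}
    (hc : IsFineChain U 1 c) (hc1 : c.getLastD 1 = 1) :
    ∃ σ ∈ L.monodromy, ∀ x, (σ x : X) = c.foldl L.lift x := by
  have hmaps (x : p ⁻¹' {1}) : c.foldl L.lift x ∈ p ⁻¹' {1} := by
    have hx : p x = 1 := x.2
    rw [Set.mem_preimage, L.p_foldl (by rwa [hx]), hx, hc1, Set.mem_singleton_iff]
  have hinj : Function.Injective fun x : p ⁻¹' {1} => (⟨_, hmaps x⟩ : p ⁻¹' {1}) :=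
    fun x y hxy => Subtype.ext <| L.foldl_injective hn (x.2.trans y.2.symm)
      (by rwa [(x.2 : p x = 1)]) (congrArg Subtype.val hxy)
  exact ⟨Equiv.ofBijective _ (Finite.injective_iff_bijective.1 hinj), ⟨c, hc, hc1, fun _ => rfl⟩,
    fun _ => rfl⟩

theorem exists_loop_foldl_eq [PreconnectedSpace X] [TopologicalSpace G] [IsTopologicalGroup G]
    (hp : Continuous p) (hn : 2 ≤ n) {V : Set G} (hV : V ∈ 𝓝 1) (hVU : V ⊆ U)
    (a b : p ⁻¹' {1}) :
    ∃ c, IsFineChain V 1 c ∧ c.getLastD 1 = 1 ∧ c.foldl L.lift a = b := by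
  obtain ⟨c, hc, hcab⟩ := L.exists_isFineChain_foldl_eq hp hn hV hVU a b
  have ha : p a = 1 := a.2
  have hlast := L.p_foldl (hc.mono hVU)
  rw [hcab, ha] at hlast
  exact ⟨c, ha ▸ hc, hlast.symm.trans b.2, hcab⟩

theorem exists_mem_monodromy_apply_eq [Finite (p ⁻¹' {1})] [PreconnectedSpace X]
    [TopologicalSpace G] [IsTopologicalGroup G] (hp : Continuous p) (hn : 2 ≤ n)
    (hU : U ∈ 𝓝 1) (a b : p ⁻¹' {1}) : ∃ σ ∈ L.monodromy, σ a = b := by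
  obtain ⟨c, hc, hc1, hcab⟩ := L.exists_loop_foldl_eq hp hn hU subset_rfl a b
  obtain ⟨σ, hσ, hσc⟩ := L.exists_mem_monodromy hn hc hc1
  exact ⟨σ, hσ, Subtype.ext ((hσc a).trans hcab)⟩

end Group

section CommGroup

variable [CommGroup G] {p : X → G} {U : Set G} (L : ChainLift p U n)

/-- `c ++ c'` and `c' ++ c` are the two boundary paths of the grid `(s, s') ↦ c(s) * c'(s')`. -/
theorem foldl_append_comm (hn : 2 ≤ n) {c c' : List G} (hc : IsFineChain U 1 c)
    (hc1 : c.getLastD 1 = 1) (hc' : IsFineChain U 1 c') (hc'1 : c'.getLastD 1 = 1) {x : X}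
    (hx : p x = 1) : (c ++ c').foldl L.lift x = (c' ++ c).foldl L.lift x := by
  let h : Multiset Bool → G := fun t => loopSeq c (t.count false) * loopSeq c' (t.count true)
  have hh : ∀ t d, (h t)⁻¹ * h (d ::ₘ t) ∈ U := by
    have hmul (a a' b b' : G) : (a * b)⁻¹ * (a' * b') = a⁻¹ * a' * (b⁻¹ * b') := by
      rw [mul_inv_rev]
      ac_rfl
    intro t d
    cases d
    · simp only [h, Multiset.count_cons, hmul]
      simpa using inv_loopSeq_mul_loopSeq_succ_mem L.one_mem hc hc1 (t.count false)
    · simp only [h, Multiset.count_cons, hmul]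
      simpa using inv_loopSeq_mul_loopSeq_succ_mem L.one_mem hc' hc'1 (t.count true)
  have e₁ : gridPath h 0 (List.replicate c.length false ++ List.replicate c'.length true) =
      c ++ c' := by
    simp [h, gridPath_append, gridPath_replicate, Multiset.count_replicate,
      loopSeq_of_length_le hc1, map_loopSeq_range']
  have e₂ : gridPath h 0 (List.replicate c'.length true ++ List.replicate c.length false) =
      c' ++ c := by
    simp [h, gridPath_append, gridPath_replicate, Multiset.count_replicate,
      loopSeq_of_length_le hc'1, map_loopSeq_range']
  rw [← e₁, ← e₂]
  exact L.foldl_gridPath_eq_of_perm hn hh List.perm_append_comm (by simp [h, hx])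

theorem commute_of_mem_monodromy (hn : 2 ≤ n) {σ τ : Equiv.Perm (p ⁻¹' {1})}
    (hσ : σ ∈ L.monodromy) (hτ : τ ∈ L.monodromy) : Commute σ τ := by
  obtain ⟨c, hc, hc1, hσc⟩ := hσ
  obtain ⟨c', hc', hc'1, hτc'⟩ := hτ
  ext x
  simp only [Equiv.Perm.mul_apply, hσc, hτc', ← List.foldl_append]
  exact L.foldl_append_comm hn hc' hc'1 hc hc1 x.2

end CommGroup

end ChainLift

section MeanGrid

variable {G : Type*} [Group G] {k : ℕ}

def meanGrid (μ : (Fin k → G) → G) (ℓ : List G) (t : Multiset (Fin k)) : G :=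
  μ fun i => loopSeq ℓ (t.count i)

variable {μ : (Fin k → G) → G} {ℓ : List G}

theorem inv_meanGrid_mul_meanGrid_cons_mem {U V : Set G} (hV1 : (1 : G) ∈ V)
    (hμV : ∀ a b : Fin k → G, (∀ i, (a i)⁻¹ * b i ∈ V) → (μ a)⁻¹ * μ b ∈ U)
    (hℓ : IsFineChain V 1 ℓ) (hℓ1 : ℓ.getLastD 1 = 1) (t : Multiset (Fin k)) (d : Fin k) :
    (meanGrid μ ℓ t)⁻¹ * meanGrid μ ℓ (d ::ₘ t) ∈ U := by
  refine hμV _ _ fun i => ?_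
  by_cases hi : i = d
  · simpa [Multiset.count_cons, hi] using inv_loopSeq_mul_loopSeq_succ_mem hV1 hℓ hℓ1 (t.count d)
  · simpa [Multiset.count_cons, hi] using hV1

theorem meanGrid_eq_one (hdiag : ∀ g, μ (fun _ => g) = g) {t : Multiset (Fin k)}
    (ht : ∀ i, loopSeq ℓ (t.count i) = 1) : meanGrid μ ℓ t = 1 := by
  simp [meanGrid, ht, hdiag]

theorem meanGrid_nsmul_finRange (hdiag : ∀ g, μ (fun _ => g) = g) (j : ℕ) :
    meanGrid μ ℓ (j • (List.finRange k : Multiset (Fin k))) = loopSeq ℓ j := by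
  simp [meanGrid, Multiset.count_nsmul, hdiag]

theorem gridPath_meanGrid_replicate
    (hsymm : ∀ (g : Fin k → G) (σ : Equiv.Perm (Fin k)), μ (g ∘ σ) = μ g) {t : Multiset (Fin k)}
    {i : Fin k} (ht : ∀ j, loopSeq ℓ (t.count j) = 1) (hti : t.count i = 0) (i₀ : Fin k) :
    gridPath (meanGrid μ ℓ) t (List.replicate ℓ.length i) =
      gridPath (meanGrid μ ℓ) 0 (List.replicate ℓ.length i₀) := by
  have hsingle {t : Multiset (Fin k)} {i : Fin k} (ht : ∀ j, loopSeq ℓ (t.count j) = 1)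
      (hti : t.count i = 0) (s : ℕ) :
      (fun j => loopSeq ℓ ((t + Multiset.replicate s i).count j)) =
        Pi.mulSingle i (loopSeq ℓ s) := by
    funext j
    by_cases hj : j = i
    · subst hj
      simp [hti]
    · simp [Multiset.count_replicate, Ne.symm hj, hj, ht j]
  simp only [gridPath_replicate, meanGrid]
  refine List.map_congr_left fun s _ => ?_
  rw [hsingle ht hti, hsingle (by simp) (Multiset.count_zero i₀),
    apply_mulSingle_eq_of_comp_perm hsymm]

theorem gridPath_meanGrid_flatMap
    (hsymm : ∀ (g : Fin k → G) (σ : Equiv.Perm (Fin k)), μ (g ∘ σ) = μ g)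
    (hℓ1 : ℓ.getLastD 1 = 1) (i₀ : Fin k) {l : List (Fin k)} (hl : l.Nodup)
    {t : Multiset (Fin k)} (ht : ∀ j, loopSeq ℓ (t.count j) = 1) (hlt : ∀ i ∈ l, t.count i = 0) :
    gridPath (meanGrid μ ℓ) t (l.flatMap (List.replicate ℓ.length)) =
      (List.replicate l.length
        (gridPath (meanGrid μ ℓ) 0 (List.replicate ℓ.length i₀))).flatten := by
  induction l generalizing t with
  | nil => simp
  | cons i l ih =>
    rw [List.nodup_cons] at hl
    rw [List.flatMap_cons, gridPath_append, gridPath_meanGrid_replicate hsymm ht (hlt i (by simp)),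
      ih hl.2, List.length_cons, List.replicate_succ, List.flatten_cons]
    · intro j
      by_cases hj : j = i
      · subst hj
        simpa [Multiset.coe_replicate, hlt j (by simp)]
          using loopSeq_of_length_le hℓ1 le_rfl
      · simp [Multiset.coe_replicate, Multiset.count_replicate, Ne.symm hj, ht j]
    · intro j hj
      have hji : j ≠ i := fun hji => hl.1 (hji ▸ hj)
      simp [Multiset.coe_replicate, Multiset.count_replicate, Ne.symm hji, hlt j (by simp [hj])]

end MeanGrid

namespace ChainLift

variable {X G : Type*} [TopologicalSpace X] [Group G] {p : X → G} {U : Set G} {k : ℕ}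
  (L : ChainLift p U k)

/-- For a symmetric idempotent `μ`, the lift of a loop `ℓ` is the `k`-th iterate of the lift of
the loop `s ↦ μ(ℓ(s), 1, …, 1)`: in `meanGrid μ ℓ` the diagonal path shortcuts to `ℓ`, and it
has the same endpoints as the staircase along the coordinate axes. -/
theorem exists_foldl_eq_iterate (hk : 2 ≤ k) {μ : (Fin k → G) → G}
    (hsymm : ∀ (g : Fin k → G) (σ : Equiv.Perm (Fin k)), μ (g ∘ σ) = μ g)
    (hdiag : ∀ g, μ (fun _ => g) = g) {V : Set G} (hV1 : (1 : G) ∈ V)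
    (hμV : ∀ a b : Fin k → G, (∀ i, (a i)⁻¹ * b i ∈ V) → (μ a)⁻¹ * μ b ∈ U) {ℓ : List G}
    (hℓ : IsFineChain V 1 ℓ) (hℓ1 : ℓ.getLastD 1 = 1) :
    ∃ m, IsFineChain U 1 m ∧ m.getLastD 1 = 1 ∧
      ∀ x, p x = 1 → ℓ.foldl L.lift x = (fun y => m.foldl L.lift y)^[k] x := by
  set h := meanGrid μ ℓ
  set w : Multiset (Fin k) := ↑(List.finRange k)
  let i₀ : Fin k := ⟨0, by omega⟩
  have hh := inv_meanGrid_mul_meanGrid_cons_mem hV1 hμV hℓ hℓ1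
  have h0 : h 0 = 1 := meanGrid_eq_one hdiag (by simp)
  have hstep (j : ℕ) : (h (j • w))⁻¹ * h ((j + 1) • w) ∈ U := by
    simpa [h, w, meanGrid_nsmul_finRange hdiag, hdiag] using
      hμV (fun _ => loopSeq ℓ j) (fun _ => loopSeq ℓ (j + 1))
        fun _ => inv_loopSeq_mul_loopSeq_succ_mem hV1 hℓ hℓ1 j
  refine ⟨gridPath h 0 (List.replicate ℓ.length i₀), h0 ▸ isFineChain_gridPath hh 0 _, ?_,
    fun x hx => ?_⟩
  · rw [← h0, getLastD_gridPath, h0]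
    refine meanGrid_eq_one hdiag fun j => ?_
    by_cases hj : j = i₀
    · simp [Multiset.coe_replicate, hj, loopSeq_of_length_le hℓ1 le_rfl]
    · simp [Multiset.coe_replicate, Multiset.count_replicate, Ne.symm hj]
  calc ℓ.foldl L.lift x
      = ((List.range' (0 + 1) ℓ.length).map fun j => h (j • w)).foldl L.lift x := by
        simp only [h, w, meanGrid_nsmul_finRange hdiag, zero_add, map_loopSeq_range']
    _ = (gridPath h 0 (List.replicate ℓ.length (List.finRange k)).flatten).foldl L.lift x := by
        rw [← L.foldl_gridPath_flatten_replicate (by omega) hh (by simp) hstep _ 0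
          (by rw [zero_nsmul]; exact hx.trans h0.symm), zero_nsmul]
    _ = (gridPath h 0 ((List.finRange k).flatMap (List.replicate ℓ.length))).foldl L.lift x :=
        L.foldl_gridPath_eq_of_perm hk hh (List.perm_flatten_replicate_flatMap_replicate _ _)
          (hx.trans h0.symm)
    _ = (fun y => (gridPath h 0 (List.replicate ℓ.length i₀)).foldl L.lift y)^[k] x := by
        rw [gridPath_meanGrid_flatMap hsymm hℓ1 i₀ (List.nodup_finRange k) (by simp) (by simp),
          List.length_finRange, List.foldl_flatten_replicate]

theorem exists_mem_monodromy_pow_eq [Finite (p ⁻¹' {1})] (hk : 2 ≤ k) {μ : (Fin k → G) → G}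
    (hsymm : ∀ (g : Fin k → G) (σ : Equiv.Perm (Fin k)), μ (g ∘ σ) = μ g)
    (hdiag : ∀ g, μ (fun _ => g) = g) {V : Set G} (hV1 : (1 : G) ∈ V)
    (hμV : ∀ a b : Fin k → G, (∀ i, (a i)⁻¹ * b i ∈ V) → (μ a)⁻¹ * μ b ∈ U) {ℓ : List G}
    (hℓ : IsFineChain V 1 ℓ) (hℓ1 : ℓ.getLastD 1 = 1) :
    ∃ σ ∈ L.monodromy, ∀ x, ((σ ^ k) x : X) = ℓ.foldl L.lift x := by
  obtain ⟨m, hm, hm1, hℓm⟩ := L.exists_foldl_eq_iterate hk hsymm hdiag hV1 hμV hℓ hℓ1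
  obtain ⟨σ, hσ, hσm⟩ := L.exists_mem_monodromy hk hm hm1
  refine ⟨σ, hσ, fun x => ?_⟩
  rw [Equiv.Perm.coe_pow, hℓm x x.2]
  exact (show Function.Semiconj Subtype.val σ (fun y => m.foldl L.lift y) from hσm).iterate_right
    k x

end ChainLift

theorem no_mean_of_covering_general
    {X G : Type*} [TopologicalSpace G] [CommGroup G] [IsTopologicalGroup G]
    [CompactSpace G]
    [TopologicalSpace X] [ConnectedSpace X] [T2Space X]
    (k : ℕ) (hk : 2 ≤ k) (p : X → G) (hp : IsCoveringOfDegree k p) :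
    ¬ ∃ μ : (Fin k → G) → G, IsMean k μ := by
  rintro ⟨μ, hμ, hsymm, hdiag⟩
  have := hp.compactSpace
  let := uniformSpaceOfCompactR1 (γ := X)
  have hfib : Nat.card (p ⁻¹' {1}) = k := hp.card_fiber 1
  have : Finite (p ⁻¹' {1}) := Nat.finite_of_card_ne_zero (by omega)
  obtain ⟨U, hU, ⟨L⟩⟩ := exists_chainLift hp.1 hp.isLocalHomeomorph.isOpenMap
    hp.isLocalHomeomorph.isLocallyInjective k
  obtain ⟨V, hV, hμV⟩ := hμ.exists_nhds_one_forall_inv_mul_mem hU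
  obtain ⟨a, b, hab⟩ := (Finite.one_lt_card_iff_nontrivial.1 (hfib ▸ hk)).exists_pair_ne
  obtain ⟨ℓ, hℓ, hℓ1, hℓab⟩ :=
    L.exists_loop_foldl_eq hp.1 hk (Filter.inter_mem hV hU) Set.inter_subset_right a b
  obtain ⟨σ, hσ, hσℓ⟩ := L.exists_mem_monodromy_pow_eq hk hsymm hdiag (V := V ∩ U)
    ⟨mem_of_mem_nhds hV, L.one_mem⟩ (fun a b h => hμV a b fun i => (h i).1) hℓ hℓ1
  have hσk : σ ^ k = 1 := hfib ▸ Equiv.Perm.pow_card_eq_one_of_commute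
    (fun _ h₁ _ h₂ => L.commute_of_mem_monodromy hk h₁ h₂)
    (L.exists_mem_monodromy_apply_eq hp.1 hk hU) hσ
  exact hab (Subtype.ext (by simpa [hσk] using (hσℓ a).trans hℓab))

/-- If there is a `k`-sheeted covering map (`k ≥ 2`) from a connected Hausdorff space
onto a compact connected abelian Hausdorff group `G`, then `G` admits no `k`-mean. -/
theorem no_mean_of_covering
    {X G : Type*} [TopologicalSpace G] [CommGroup G] [IsTopologicalGroup G]
    [CompactSpace G] [ConnectedSpace G] [T2Space G]
    [TopologicalSpace X] [ConnectedSpace X] [T2Space X]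
    (k : ℕ) (hk : 2 ≤ k) (p : X → G) (hp : IsCoveringOfDegree k p) :
    ¬ ∃ μ : (Fin k → G) → G, IsMean k μ :=
  no_mean_of_covering_general k hk p hp
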